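/- Let d ≥ 1, let b : ℝ^d → ℝ^d and k : ℝ^d → ℝ be continuous with k(x) ≥ 0 for all x, and let U ⊆ ℝ^d be open. Let f be twice continuously differentiable on an open set containing the closure of U. Assume that 𝒜f(x) > 0 for every x ∈ U, and that there exists x₀ in the closure of U with f(x₀) = sup{ f(x) : x ∈ closure of U } and f(x₀) ≥ 0. Then x₀ lies on the topological boundary of U; in particular x₀ ∉ U. -/

import Mathlib

/-!
At an interior maximum `x₀` the gradient of `f` vanishes and every second directional
derivative is `≤ 0`, so `Δf(x₀) ≤ 0`; since `k(x₀) f(x₀) ≥ 0`, this forces `𝒜f(x₀) ≤ 0`,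
contradicting `𝒜f > 0` on `U`. Hence `x₀ ∈ closure U \ U`, which is the frontier of the open
set `U`.
-/

open MeasureTheory

noncomputable section

/-- Laplacian of `f : ℝ^d → ℝ` at `x`, computed as the trace of the second derivative. -/
def lap {d : ℕ} (f : EuclideanSpace ℝ (Fin d) → ℝ) (x : EuclideanSpace ℝ (Fin d)) : ℝ :=
  ∑ i, fderiv ℝ (fderiv ℝ f) x (EuclideanSpace.single i 1) (EuclideanSpace.single i 1)

/-- The elliptic generator with killing:
`𝒜 f (x) = (1/2) Δf(x) + ⟨b(x), ∇f(x)⟩ − k(x) f(x)`. -/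
def gen {d : ℕ} (b : EuclideanSpace ℝ (Fin d) → EuclideanSpace ℝ (Fin d))
    (k : EuclideanSpace ℝ (Fin d) → ℝ) (f : EuclideanSpace ℝ (Fin d) → ℝ)
    (x : EuclideanSpace ℝ (Fin d)) : ℝ :=
  (1 / 2) * lap f x + (inner ℝ (b x) (gradient f x) : ℝ) - k x * f x

open Filter Topology

/-- If the second derivative were positive, the second-derivative test would make `x` also a
local minimum, so `g` would be locally constant and its second derivative would vanish. -/
theorem IsLocalMax.deriv_deriv_nonpos {g : ℝ → ℝ} {x : ℝ} (h : IsLocalMax g x)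
    (hc : ContinuousAt g x) : deriv (deriv g) x ≤ 0 := by
  by_contra! hpos
  have hmin : IsLocalMin g x := isLocalMin_of_deriv_deriv_pos hpos h.deriv_eq_zero hc
  have hconst : g =ᶠ[𝓝 x] fun _ => g x :=
    (hmin.and h).mono fun _ hy => le_antisymm hy.2 hy.1
  have hderiv : deriv g =ᶠ[𝓝 x] fun _ => 0 := by
    simpa only [deriv_const'] using hconst.deriv
  simp [hderiv.deriv_eq] at hpos

theorem IsLocalMax.fderiv_fderiv_apply_self_nonpos {E : Type*} [NormedAddCommGroup E]
    [NormedSpace ℝ E] {f : E → ℝ} {x : E} (h : IsLocalMax f x) (hf : ContDiffAt ℝ 2 f x)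
    (v : E) : fderiv ℝ (fderiv ℝ f) x v v ≤ 0 := by
  set line : ℝ → E := fun t => x + t • v
  have hline : ∀ t, HasDerivAt line v t := fun t => by
    simpa [line] using ((hasDerivAt_id t).smul_const v).const_add x
  have hline0 : line 0 = x := by simp [line]
  have hcont : ContinuousAt line 0 := (hline 0).continuousAt
  have hmax : IsLocalMax (f ∘ line) 0 := by
    have h' : IsLocalMax f (line 0) := hline0 ▸ h
    exact h'.comp_continuous hcont
  have hderiv : deriv (f ∘ line) =ᶠ[𝓝 0] fun t => fderiv ℝ f (line t) v := by
    have hf' : ∀ᶠ y in 𝓝 x, DifferentiableAt ℝ f y :=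
      (hf.eventually (by simp)).mono fun y hy => hy.differentiableAt two_ne_zero
    rw [← hline0] at hf'
    filter_upwards [hcont.eventually hf'] with t ht
    exact (ht.hasFDerivAt.comp_hasDerivAt t (hline t)).deriv
  have hsecond : HasDerivAt (fun t => fderiv ℝ f (line t) v) (fderiv ℝ (fderiv ℝ f) x v v) 0 := by
    have hf2 : DifferentiableAt ℝ (fderiv ℝ f) (line 0) := by
      rw [hline0]; exact (hf.fderiv_right le_rfl).differentiableAt one_ne_zero
    simpa [hline0] using
      (hf2.hasFDerivAt.comp_hasDerivAt 0 (hline 0)).clm_apply (hasDerivAt_const 0 v)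
  calc fderiv ℝ (fderiv ℝ f) x v v = deriv (deriv (f ∘ line)) 0 := by
        rw [hderiv.deriv_eq, hsecond.deriv]
    _ ≤ 0 := hmax.deriv_deriv_nonpos (hf.continuousAt.comp_of_eq hcont hline0)

theorem IsLocalMax.lap_nonpos {d : ℕ} {f : EuclideanSpace ℝ (Fin d) → ℝ}
    {x : EuclideanSpace ℝ (Fin d)} (h : IsLocalMax f x) (hf : ContDiffAt ℝ 2 f x) :
    lap f x ≤ 0 :=
  Finset.sum_nonpos fun _ _ => h.fderiv_fderiv_apply_self_nonpos hf _

theorem IsLocalMax.gen_nonpos {d : ℕ} (b : EuclideanSpace ℝ (Fin d) → EuclideanSpace ℝ (Fin d))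
    {k : EuclideanSpace ℝ (Fin d) → ℝ} {f : EuclideanSpace ℝ (Fin d) → ℝ}
    {x : EuclideanSpace ℝ (Fin d)} (h : IsLocalMax f x) (hf : ContDiffAt ℝ 2 f x)
    (hk : 0 ≤ k x) (hfx : 0 ≤ f x) : gen b k f x ≤ 0 := by
  have hgrad : gradient f x = 0 := by simp [gradient, h.fderiv_eq_zero]
  have hkf : 0 ≤ k x * f x := mul_nonneg hk hfx
  rw [gen, hgrad, inner_zero_right]
  linarith [h.lap_nonpos hf]

theorem weak_maximum_principle {d : ℕ}
    (b : EuclideanSpace ℝ (Fin d) → EuclideanSpace ℝ (Fin d))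
    (k : EuclideanSpace ℝ (Fin d) → ℝ)
    (hk0 : ∀ x, 0 ≤ k x)
    (U : Set (EuclideanSpace ℝ (Fin d))) (hU : IsOpen U)
    (V : Set (EuclideanSpace ℝ (Fin d))) (hV : IsOpen V) (hUV : closure U ⊆ V)
    (f : EuclideanSpace ℝ (Fin d) → ℝ) (hf : ContDiffOn ℝ 2 f V)
    (hA : ∀ x ∈ U, 0 < gen b k f x)
    (x₀ : EuclideanSpace ℝ (Fin d)) (hx₀ : x₀ ∈ closure U)
    (hmax : ∀ x ∈ closure U, f x ≤ f x₀)
    (hnonneg : 0 ≤ f x₀) :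
    x₀ ∈ frontier U ∧ x₀ ∉ U := by
  have hnotU : x₀ ∉ U := fun hx₀U => by
    have hlocmax : IsLocalMax f x₀ :=
      Filter.mem_of_superset (hU.mem_nhds hx₀U) fun x hx => hmax x (subset_closure hx)
    have hC2 : ContDiffAt ℝ 2 f x₀ := hf.contDiffAt (hV.mem_nhds (hUV hx₀))
    exact (hA x₀ hx₀U).not_ge (hlocmax.gen_nonpos b hC2 (hk0 x₀) hnonneg)
  rw [hU.frontier_eq]
  exact ⟨⟨hx₀, hnotU⟩, hnotU⟩
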